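/- Let W_m(q) = [[G^0_m(q), G^1_m(q)],[G^0_{m+1}(q), G^1_{m+1}(q)]] with G^0_m, G^1_m as above for |q|<1. Then \det(W_m(q)) = 2 for all m \in \mathbb{Z}. -/

import Mathlib

/-!
Both `G⁰_m` and `G¹_m` satisfy the three-term recurrence `y_{m+2} = (2 - q^{m+1}) y_{m+1} - y_m`:
in each case the combination of the three series is, term by term, a telescoping difference
`u_n - u_{n+1}` whose sum is `u_0 = 0`. Hence the Casoratian `det W_m` does not depend on `m`.
As `m → +∞` every term with `n ≥ 1` is killed by the factor `q^{mn}`, so `G⁰_m → 1` and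
`G¹_m - 2m G⁰_m → E₁(q)`, and therefore `det W_m → 2·1·1 + E₁(q) - E₁(q) = 2`.
-/

/-- `(q;q)_n = ∏_{j=1}^n (1-q^j)`. -/
noncomputable def qPoch (q : ℂ) (n : ℕ) : ℂ :=
  ∏ j ∈ Finset.range n, (1 - q ^ (j + 1))

/-- Eisenstein series `E₁(q) = 1 - 4 ∑_{n≥1} q^n/(1-q^n)`. -/
noncomputable def Eone (q : ℂ) : ℂ :=
  1 - 4 * ∑' n : ℕ, q ^ (n + 1) / (1 - q ^ (n + 1))

/-- `G⁰_m(q)`. -/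
noncomputable def G0 (q : ℂ) (m : ℤ) : ℂ :=
  ∑' n : ℕ, (-1 : ℂ) ^ n * q ^ (n * (n + 1) / 2) * q ^ (m * (n : ℤ)) / (qPoch q n) ^ 2

/-- `G¹_m(q)`. -/
noncomputable def G1 (q : ℂ) (m : ℤ) : ℂ :=
  ∑' n : ℕ, (-1 : ℂ) ^ n * q ^ (n * (n + 1) / 2) * q ^ (m * (n : ℤ)) / (qPoch q n) ^ 2 *
    (2 * m + Eone q + 2 * ∑ j ∈ Finset.Icc 1 n, (1 + q ^ j) / (1 - q ^ j))

/-- The Wronskian matrix `W_m(q)`. -/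
noncomputable def Wm (q : ℂ) (m : ℤ) : Matrix (Fin 2) (Fin 2) ℂ :=
  !![G0 q m, G1 q m; G0 q (m + 1), G1 q (m + 1)]

open Filter Topology Finset

lemma triangle_add_one (n : ℕ) : (n + 1) * (n + 1 + 1) / 2 = n * (n + 1) / 2 + (n + 1) := by
  have := Nat.triangle_succ (n + 1)
  simp only [Nat.add_sub_cancel] at this
  rw [mul_comm, this, mul_comm]

lemma summable_pow_triangle_mul_pow {𝕜 : Type*} [NormedField 𝕜] [CompleteSpace 𝕜] {x : 𝕜}
    (hx : ‖x‖ < 1) (s : 𝕜) : Summable fun n : ℕ => x ^ (n * (n + 1) / 2) * s ^ n := by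
  refine summable_of_ratio_norm_eventually_le (r := 1 / 2) (by norm_num) ?_
  have hratio : Tendsto (fun n : ℕ => ‖x‖ ^ (n + 1) * ‖s‖) atTop (𝓝 0) := by
    simpa using ((tendsto_pow_atTop_nhds_zero_of_lt_one (norm_nonneg x) hx).comp
      (tendsto_add_atTop_nat 1)).mul_const ‖s‖
  filter_upwards [hratio.eventually_le_const (by norm_num : (0 : ℝ) < 1 / 2)] with n hn
  calc ‖x ^ ((n + 1) * (n + 1 + 1) / 2) * s ^ (n + 1)‖
      = ‖x‖ ^ (n + 1) * ‖s‖ * ‖x ^ (n * (n + 1) / 2) * s ^ n‖ := by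
        rw [triangle_add_one]; simp only [norm_mul, norm_pow, pow_add, pow_succ]; ring
    _ ≤ 1 / 2 * ‖x ^ (n * (n + 1) / 2) * s ^ n‖ := mul_le_mul_of_nonneg_right hn (norm_nonneg _)

lemma tsum_sub_succ_eq {α : Type*} [AddCommGroup α] [TopologicalSpace α]
    [IsTopologicalAddGroup α] [T2Space α] {g : ℕ → α} (hg : Summable g) :
    ∑' n, (g n - g (n + 1)) = g 0 := by
  rw [hg.tsum_sub ((summable_nat_add_iff 1).2 hg), hg.tsum_eq_zero_add, add_sub_cancel_right]

lemma casoratian_add_nat {R : Type*} [CommRing R] {a b c : ℤ → R}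
    (ha : ∀ m, a (m + 2) = c m * a (m + 1) - a m) (hb : ∀ m, b (m + 2) = c m * b (m + 1) - b m)
    (m : ℤ) (k : ℕ) :
    a (m + k) * b (m + k + 1) - b (m + k) * a (m + k + 1) = a m * b (m + 1) - b m * a (m + 1) := by
  induction k with
  | zero => simp
  | succ k ih =>
    rw [← ih, Nat.cast_succ, ← add_assoc, add_assoc _ 1 1, one_add_one_eq_two, ha, hb]
    ring

section

variable {q : ℂ}

lemma one_sub_norm_le_norm_one_sub_pow (hq : ‖q‖ ≤ 1) {j : ℕ} (hj : j ≠ 0) :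
    1 - ‖q‖ ≤ ‖1 - q ^ j‖ := by
  have := norm_sub_norm_le (1 : ℂ) (q ^ j)
  rw [norm_one, norm_pow] at this
  linarith [pow_le_of_le_one (norm_nonneg q) hq hj]

lemma one_sub_norm_pow_le_norm_qPoch (hq : ‖q‖ ≤ 1) (n : ℕ) : (1 - ‖q‖) ^ n ≤ ‖qPoch q n‖ := by
  simpa [qPoch, norm_prod] using prod_le_prod (s := range n) (fun _ _ => sub_nonneg.2 hq)
    fun j _ => one_sub_norm_le_norm_one_sub_pow hq j.succ_ne_zero

lemma one_sub_pow_ne_zero (hq : ‖q‖ < 1) {j : ℕ} (hj : j ≠ 0) : 1 - q ^ j ≠ 0 :=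
  norm_pos_iff.1 <| (sub_pos.2 hq).trans_le (one_sub_norm_le_norm_one_sub_pow hq.le hj)

lemma qPoch_ne_zero (hq : ‖q‖ < 1) (n : ℕ) : qPoch q n ≠ 0 :=
  norm_pos_iff.1 <| (pow_pos (sub_pos.2 hq) n).trans_le (one_sub_norm_pow_le_norm_qPoch hq.le n)

lemma qPoch_succ (n : ℕ) : qPoch q (n + 1) = qPoch q n * (1 - q ^ (n + 1)) :=
  prod_range_succ _ n

noncomputable def gTerm (q : ℂ) (m : ℤ) (n : ℕ) : ℂ :=
  (-1 : ℂ) ^ n * q ^ (n * (n + 1) / 2) * q ^ (m * (n : ℤ)) / (qPoch q n) ^ 2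

noncomputable def gWeight (q : ℂ) (n : ℕ) : ℂ :=
  Eone q + 2 * ∑ j ∈ Icc 1 n, (1 + q ^ j) / (1 - q ^ j)

lemma gWeight_zero : gWeight q 0 = Eone q := by
  simp [gWeight]

lemma G0_eq_tsum (m : ℤ) : G0 q m = ∑' n, gTerm q m n := rfl

lemma G1_eq_tsum (m : ℤ) : G1 q m = ∑' n, gTerm q m n * (2 * m + gWeight q n) := by
  simp only [G1, gTerm, gWeight, add_assoc]

lemma norm_gTerm_le (hq : ‖q‖ < 1) (m : ℤ) (n : ℕ) :
    ‖gTerm q m n‖ ≤ ‖q‖ ^ (n * (n + 1) / 2) * (‖q‖ ^ m / (1 - ‖q‖) ^ 2) ^ n := by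
  have hpos : 0 < (1 - ‖q‖) ^ n := pow_pos (sub_pos.2 hq) n
  calc ‖gTerm q m n‖ = ‖q‖ ^ (n * (n + 1) / 2) * (‖q‖ ^ m) ^ n / ‖qPoch q n‖ ^ 2 := by
        simp [gTerm, norm_zpow, zpow_mul]
    _ ≤ ‖q‖ ^ (n * (n + 1) / 2) * (‖q‖ ^ m) ^ n / ((1 - ‖q‖) ^ n) ^ 2 := by
        gcongr; exact one_sub_norm_pow_le_norm_qPoch hq.le n
    _ = _ := by rw [div_pow, ← pow_mul, ← pow_mul, mul_comm 2 n, mul_div_assoc]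

lemma summable_gTerm_mul (hq : ‖q‖ < 1) (m : ℤ) {w : ℕ → ℂ} {C R : ℝ}
    (hw : ∀ n, ‖w n‖ ≤ C * R ^ n) : Summable fun n => gTerm q m n * w n := by
  refine Summable.of_norm_bounded ((summable_pow_triangle_mul_pow (x := ‖q‖) (by rwa [norm_norm])
    (‖q‖ ^ m / (1 - ‖q‖) ^ 2 * R)).mul_left C) fun n => ?_
  rw [norm_mul]
  calc ‖gTerm q m n‖ * ‖w n‖
      ≤ ‖q‖ ^ (n * (n + 1) / 2) * (‖q‖ ^ m / (1 - ‖q‖) ^ 2) ^ n * (C * R ^ n) :=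
        mul_le_mul (norm_gTerm_le hq m n) (hw n) (norm_nonneg _) (by positivity)
    _ = C * (‖q‖ ^ (n * (n + 1) / 2) * (‖q‖ ^ m / (1 - ‖q‖) ^ 2 * R) ^ n) := by ring

lemma summable_gTerm (hq : ‖q‖ < 1) (m : ℤ) : Summable (gTerm q m) := by
  simpa using summable_gTerm_mul hq m (w := 1) (C := 1) (R := 1) (by simp)

lemma norm_gWeight_le (hq : ‖q‖ < 1) (n : ℕ) :
    ‖gWeight q n‖ ≤ (‖Eone q‖ + 4 / (1 - ‖q‖)) * 2 ^ n := by
  have hgap : 0 < 1 - ‖q‖ := sub_pos.2 hq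
  have hterm : ∀ j ∈ Icc 1 n, ‖(1 + q ^ j) / (1 - q ^ j)‖ ≤ 2 / (1 - ‖q‖) := by
    intro j hj
    have hnum : ‖1 + q ^ j‖ ≤ 2 := by
      have := pow_le_one₀ (norm_nonneg q) hq.le (n := j)
      calc ‖1 + q ^ j‖ ≤ ‖(1 : ℂ)‖ + ‖q ^ j‖ := norm_add_le _ _
        _ ≤ 2 := by rw [norm_one, norm_pow]; linarith
    rw [norm_div]
    exact div_le_div₀ zero_le_two hnum hgap
      (one_sub_norm_le_norm_one_sub_pow hq.le (by grind))
  have hsum : ‖∑ j ∈ Icc 1 n, (1 + q ^ j) / (1 - q ^ j)‖ ≤ n * (2 / (1 - ‖q‖)) := by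
    simpa using norm_sum_le_of_le _ hterm
  have hn : (n : ℝ) ≤ 2 ^ n := by exact_mod_cast (Nat.lt_two_pow_self).le
  have hone : (1 : ℝ) ≤ 2 ^ n := one_le_pow₀ one_le_two
  calc ‖gWeight q n‖ ≤ ‖Eone q‖ + 2 * (n * (2 / (1 - ‖q‖))) := by
        refine (norm_add_le _ _).trans ?_
        rw [norm_mul, Complex.norm_two]; gcongr
    _ = ‖Eone q‖ + 4 / (1 - ‖q‖) * n := by ring
    _ ≤ ‖Eone q‖ * 2 ^ n + 4 / (1 - ‖q‖) * 2 ^ n := by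
        gcongr; exact le_mul_of_one_le_right (norm_nonneg _) hone
    _ = _ := by ring

lemma norm_add_gWeight_le (hq : ‖q‖ < 1) (c : ℂ) (n : ℕ) :
    ‖c + gWeight q n‖ ≤ (‖c‖ + ‖Eone q‖ + 4 / (1 - ‖q‖)) * 2 ^ n := by
  have hone : (1 : ℝ) ≤ 2 ^ n := one_le_pow₀ one_le_two
  calc ‖c + gWeight q n‖ ≤ ‖c‖ * 2 ^ n + (‖Eone q‖ + 4 / (1 - ‖q‖)) * 2 ^ n :=
        (norm_add_le _ _).trans
          (add_le_add (le_mul_of_one_le_right (norm_nonneg _) hone) (norm_gWeight_le hq n))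
    _ = _ := by ring

lemma summable_gTerm_mul_add_gWeight (hq : ‖q‖ < 1) (m : ℤ) (c : ℂ) :
    Summable fun n => gTerm q m n * (c + gWeight q n) :=
  summable_gTerm_mul hq m (norm_add_gWeight_le hq c)

lemma norm_one_sub_pow_le_two (hq : ‖q‖ ≤ 1) (n : ℕ) : ‖1 - q ^ n‖ ≤ 2 := by
  have := pow_le_one₀ (norm_nonneg q) hq (n := n)
  calc ‖1 - q ^ n‖ ≤ ‖(1 : ℂ)‖ + ‖q ^ n‖ := norm_sub_le _ _
    _ ≤ 2 := by rw [norm_one, norm_pow]; linarith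

lemma norm_one_sub_pow_mul_add_gWeight_le (hq : ‖q‖ < 1) (c : ℂ) (n : ℕ) :
    ‖(1 - q ^ n) * ((c + gWeight q n) * (1 - q ^ n) - 4 * q ^ n)‖
      ≤ (4 * (‖c‖ + ‖Eone q‖ + 4 / (1 - ‖q‖)) + 8) * 2 ^ n := by
  have hsub := norm_one_sub_pow_le_two hq.le n
  have hpow : ‖q ^ n‖ ≤ 1 := by rw [norm_pow]; exact pow_le_one₀ (norm_nonneg q) hq.le
  have hone : (1 : ℝ) ≤ 2 ^ n := one_le_pow₀ one_le_two
  have hweight := norm_add_gWeight_le hq c n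
  have hinner : ‖(c + gWeight q n) * (1 - q ^ n) - 4 * q ^ n‖
      ≤ (‖c‖ + ‖Eone q‖ + 4 / (1 - ‖q‖)) * 2 ^ n * 2 + 4 :=
    calc _ ≤ ‖c + gWeight q n‖ * ‖1 - q ^ n‖ + 4 * ‖q ^ n‖ := by
          refine (norm_sub_le _ _).trans_eq ?_
          rw [norm_mul, norm_mul, RCLike.norm_ofNat]
      _ ≤ (‖c‖ + ‖Eone q‖ + 4 / (1 - ‖q‖)) * 2 ^ n * 2 + 4 * 1 := by gcongr
      _ = _ := by ring
  rw [norm_mul]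
  nlinarith [norm_nonneg (1 - q ^ n), norm_nonneg (c + gWeight q n)]

lemma gTerm_zero (m : ℤ) : gTerm q m 0 = 1 := by
  simp [gTerm, qPoch]

lemma gTerm_add_nat (hq0 : q ≠ 0) (m : ℤ) (k n : ℕ) :
    gTerm q (m + k) n = gTerm q m n * (q ^ n) ^ k := by
  rw [gTerm, gTerm, add_mul, zpow_add₀ hq0, ← Nat.cast_mul, zpow_natCast, mul_comm k, pow_mul]
  ring

lemma gTerm_succ_mul (hq : ‖q‖ < 1) (m : ℤ) (n : ℕ) :
    gTerm q m (n + 1) * (1 - q ^ (n + 1)) ^ 2 = -(q ^ m * q ^ (n + 1) * gTerm q m n) := by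
  have hpoch := qPoch_ne_zero hq n
  have hfactor := one_sub_pow_ne_zero hq n.succ_ne_zero
  simp only [gTerm, qPoch_succ, triangle_add_one, zpow_mul, zpow_natCast]
  field_simp
  ring

lemma gWeight_succ_mul (hq : ‖q‖ < 1) (n : ℕ) :
    gWeight q (n + 1) * (1 - q ^ (n + 1)) =
      gWeight q n * (1 - q ^ (n + 1)) + 2 * (1 + q ^ (n + 1)) := by
  have hfactor := one_sub_pow_ne_zero hq n.succ_ne_zero
  rw [gWeight, gWeight, sum_Icc_succ_top (Nat.succ_pos n)]
  field_simp
  ring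

lemma gTerm_recurrence (hq0 : q ≠ 0) (hq : ‖q‖ < 1) (m : ℤ) (n : ℕ) :
    gTerm q m n + gTerm q (m + 2) n - (2 - q ^ (m + 1)) * gTerm q (m + 1) n =
      gTerm q m n * (1 - q ^ n) ^ 2 - gTerm q m (n + 1) * (1 - q ^ (n + 1)) ^ 2 := by
  have h1 := gTerm_add_nat hq0 m 1 n
  have h2 := gTerm_add_nat hq0 m 2 n
  push_cast at h1 h2
  rw [h1, h2, gTerm_succ_mul hq, zpow_add_one₀ hq0, pow_succ]
  ring

lemma gTerm_mul_weight_recurrence (hq0 : q ≠ 0) (hq : ‖q‖ < 1) (m : ℤ) (n : ℕ) :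
    gTerm q m n * (2 * m + gWeight q n) + gTerm q (m + 2) n * (2 * ↑(m + 2) + gWeight q n)
        - (2 - q ^ (m + 1)) * (gTerm q (m + 1) n * (2 * ↑(m + 1) + gWeight q n)) =
      gTerm q m n * (1 - q ^ n) * ((2 * m + gWeight q n) * (1 - q ^ n) - 4 * q ^ n)
        - gTerm q m (n + 1) * (1 - q ^ (n + 1))
          * ((2 * m + gWeight q (n + 1)) * (1 - q ^ (n + 1)) - 4 * q ^ (n + 1)) := by
  have h1 := gTerm_add_nat hq0 m 1 n
  have h2 := gTerm_add_nat hq0 m 2 n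
  push_cast at h1 h2 ⊢
  rw [h1, h2, zpow_add_one₀ hq0, pow_succ]
  linear_combination (2 * m + gWeight q n + 2) * gTerm_succ_mul hq m n
    + gTerm q m (n + 1) * (1 - q ^ n * q) * gWeight_succ_mul hq n

lemma G0_add_two (hq0 : q ≠ 0) (hq : ‖q‖ < 1) (m : ℤ) :
    G0 q (m + 2) = (2 - q ^ (m + 1)) * G0 q (m + 1) - G0 q m := by
  have htel : Summable fun n => gTerm q m n * (1 - q ^ n) ^ 2 := by
    refine summable_gTerm_mul hq m (C := 4) (R := 1) fun n => ?_
    rw [norm_pow, one_pow, mul_one]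
    nlinarith [norm_one_sub_pow_le_two hq.le n, norm_nonneg (1 - q ^ n)]
  have hzero : ∑' n, (gTerm q m n + gTerm q (m + 2) n
      - (2 - q ^ (m + 1)) * gTerm q (m + 1) n) = 0 := by
    simp only [gTerm_recurrence hq0 hq m]
    rw [tsum_sub_succ_eq htel, gTerm_zero, pow_zero, sub_self, zero_pow two_ne_zero, mul_zero]
  have hs := summable_gTerm hq
  rw [((hs m).add (hs (m + 2))).tsum_sub ((hs (m + 1)).mul_left _), (hs m).tsum_add (hs (m + 2)),
    tsum_mul_left] at hzero
  simp only [G0_eq_tsum]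
  linear_combination hzero

lemma G1_add_two (hq0 : q ≠ 0) (hq : ‖q‖ < 1) (m : ℤ) :
    G1 q (m + 2) = (2 - q ^ (m + 1)) * G1 q (m + 1) - G1 q m := by
  have htel : Summable fun n => gTerm q m n * (1 - q ^ n)
      * ((2 * m + gWeight q n) * (1 - q ^ n) - 4 * q ^ n) := by
    simpa only [mul_assoc] using summable_gTerm_mul hq m (norm_one_sub_pow_mul_add_gWeight_le hq _)
  have hzero : ∑' n, (gTerm q m n * (2 * m + gWeight q n)
      + gTerm q (m + 2) n * (2 * ↑(m + 2) + gWeight q n)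
      - (2 - q ^ (m + 1)) * (gTerm q (m + 1) n * (2 * ↑(m + 1) + gWeight q n))) = 0 := by
    simp only [gTerm_mul_weight_recurrence hq0 hq m]
    rw [tsum_sub_succ_eq htel, gTerm_zero, pow_zero, sub_self, mul_zero, zero_mul]
  have hs k := summable_gTerm_mul_add_gWeight hq k (2 * k)
  rw [((hs m).add (hs (m + 2))).tsum_sub ((hs (m + 1)).mul_left _), (hs m).tsum_add (hs (m + 2)),
    tsum_mul_left] at hzero
  simp only [G1_eq_tsum]
  linear_combination hzero

lemma tendsto_tsum_gTerm_add_nat_mul (hq0 : q ≠ 0) (hq : ‖q‖ < 1) (m : ℤ) {w : ℕ → ℂ}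
    (hw : Summable fun n => gTerm q m n * w n) :
    Tendsto (fun k : ℕ => ∑' n, gTerm q (m + k) n * w n) atTop (𝓝 (w 0)) := by
  have hpoint (n : ℕ) : Tendsto (fun k : ℕ => gTerm q (m + k) n * w n) atTop
      (𝓝 (if n = 0 then w 0 else 0)) := by
    simp only [gTerm_add_nat hq0]
    rcases n with _ | n
    · simp [gTerm_zero]
    · have hpow : Tendsto (fun k : ℕ => (q ^ (n + 1)) ^ k) atTop (𝓝 0) :=
        tendsto_pow_atTop_nhds_zero_of_norm_lt_one
          (by rw [norm_pow]; exact pow_lt_one₀ (norm_nonneg q) hq n.succ_ne_zero)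
      simpa using (hpow.const_mul (gTerm q m (n + 1))).mul_const (w (n + 1))
  have hbound : ∀ᶠ k : ℕ in atTop, ∀ n, ‖gTerm q (m + k) n * w n‖ ≤ ‖gTerm q m n * w n‖ := by
    refine Eventually.of_forall fun k n => ?_
    rw [gTerm_add_nat hq0, mul_right_comm, norm_mul _ ((q ^ n) ^ k)]
    refine mul_le_of_le_one_right (norm_nonneg _) ?_
    rw [norm_pow, norm_pow]
    exact pow_le_one₀ (by positivity) (pow_le_one₀ (norm_nonneg q) hq.le)
  simpa using tendsto_tsum_of_dominated_convergence hw.norm hpoint hbound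

lemma G0_mul_G1_sub_G1_mul_G0 (hq0 : q ≠ 0) (hq : ‖q‖ < 1) (m : ℤ) :
    G0 q m * G1 q (m + 1) - G1 q m * G0 q (m + 1) = 2 := by
  set H : ℤ → ℂ := fun j => ∑' n, gTerm q j n * gWeight q n
  have hsplit (j : ℤ) : G1 q j = 2 * j * G0 q j + H j := by
    rw [G1_eq_tsum, G0_eq_tsum, ← tsum_mul_left, ← ((summable_gTerm hq j).mul_left _).tsum_add
      (by simpa using summable_gTerm_mul_add_gWeight hq j 0)]
    exact tsum_congr fun n => by ring
  have hG0 (j : ℤ) : Tendsto (fun k : ℕ => G0 q (j + k)) atTop (𝓝 1) := by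
    simpa [G0_eq_tsum] using
      tendsto_tsum_gTerm_add_nat_mul hq0 hq j (w := 1) (by simpa using summable_gTerm hq j)
  have hH (j : ℤ) : Tendsto (fun k : ℕ => H (j + k)) atTop (𝓝 (Eone q)) := by
    rw [← gWeight_zero]
    exact tendsto_tsum_gTerm_add_nat_mul hq0 hq j
      (by simpa using summable_gTerm_mul_add_gWeight hq j 0)
  have hshift {f : ℤ → ℂ} {l : ℂ} (hf : Tendsto (fun k : ℕ => f (m + 1 + k)) atTop (𝓝 l)) :
      Tendsto (fun k : ℕ => f (m + k + 1)) atTop (𝓝 l) :=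
    hf.congr fun k => by rw [add_right_comm]
  have hlim : Tendsto
      (fun k : ℕ => G0 q (m + k) * G1 q (m + k + 1) - G1 q (m + k) * G0 q (m + k + 1))
      atTop (𝓝 2) := by
    have hcomb := (((hG0 m).mul (hshift (hG0 (m + 1)))).const_mul 2).add
      (((hG0 m).mul (hshift (hH (m + 1)))).sub ((hH m).mul (hshift (hG0 (m + 1)))))
    rw [mul_one, mul_one, one_mul, mul_one, sub_self, add_zero] at hcomb
    refine hcomb.congr fun k => ?_
    rw [hsplit, hsplit]
    push_cast
    ring
  exact tendsto_nhds_unique (tendsto_const_nhds.congr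
    (casoratian_add_nat (G0_add_two hq0 hq) (G1_add_two hq0 hq) m · |>.symm)) hlim

end

theorem stmt_9 (q : ℂ) (hq0 : q ≠ 0) (hq : ‖q‖ < 1) (m : ℤ) :
    (Wm q m).det = 2 := by
  rw [Wm, Matrix.det_fin_two_of]
  exact G0_mul_G1_sub_G1_mul_G0 hq0 hq m
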